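/- Let G be a k-connected graph, P a longest path in G with endpoints p1 and p2, x a vertex not on P, and Q1, ..., Qk internally vertex-disjoint paths from x to P meeting P only at their endpoints v1, ..., vk, ordered so that v1, ..., vk appear in this order along P from p1. Then the distance along P from p1 to v1 is at least |Q1| + |Qk| - 1. -/

import Mathlib

open SimpleGraph

variable {V : Type*} [Fintype V] [DecidableEq V]

/-- Distance from a vertex `u` to the vertex set of a walk `P`. -/
noncomputable def walkDist (G : SimpleGraph V) {a b : V} (P : G.Walk a b) (u : V) : ℕ :=
  P.support.toFinset.inf' ⟨a, List.mem_toFinset.mpr P.start_mem_support⟩ (fun x => G.dist u x)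

/-- Eccentricity of a walk: max distance from any vertex of `G` to the walk. -/
noncomputable def eccW (G : SimpleGraph V) {a b : V} (P : G.Walk a b) : ℕ :=
  Finset.univ.sup (walkDist G P)

/-- Path eccentricity of a graph. -/
noncomputable def pe (G : SimpleGraph V) : ℕ :=
  sInf {m | ∃ (a b : V) (P : G.Walk a b), P.IsPath ∧ eccW G P = m}

/-- `P` is a longest path in `G`. -/
def IsLongestPath (G : SimpleGraph V) {a b : V} (P : G.Walk a b) : Prop :=
  P.IsPath ∧ ∀ (c d : V) (Q : G.Walk c d), Q.IsPath → Q.length ≤ P.length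

/-- `G` is `k`-connected. -/
def KConnected (k : ℕ) (G : SimpleGraph V) : Prop :=
  k + 1 ≤ Fintype.card V ∧
    ∀ S : Finset V, S.card < k → (G.induce ((↑S : Set V)ᶜ)).Connected

/-! Glue `Q₁` and `Qₖ` at `x` into a path `C` from `v₁` to `vₖ` that meets `P` only at its ends.
Starting at the vertex of `P` just before `vₖ`, walk back along `P` to `v₁`, cross over by `C`, and
continue along `P` from `vₖ` to `p₂`. Compared with `P`, this path loses the segment from `p₁` to
`v₁` and the edge entering `vₖ` and gains `C`, so maximality of `P` gives
`|Q₁| + |Qₖ| ≤ d_P(p₁, v₁) + 1`. -/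

namespace SimpleGraph.Walk

variable {U : Type*} {G : SimpleGraph U} {a b u v w : U}

theorem IsPath.append {p : G.Walk u v} {q : G.Walk v w} (hp : p.IsPath) (hq : q.IsPath)
    (h : ∀ y ∈ p.support, y ∈ q.support → y = v) : (p.append q).IsPath := by
  rw [isPath_def, support_append]
  refine hp.support_nodup.append hq.support_nodup.tail fun y hyp hyq ↦ ?_
  obtain rfl := h y hyp (List.mem_of_mem_tail hyq)
  exact (List.nodup_cons.mp (q.cons_tail_support ▸ hq.support_nodup)).1 hyq

theorem IsPath.eq_of_mem_support_append {p : G.Walk u v} {q : G.Walk v w}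
    (h : (p.append q).IsPath) {y : U} (hyp : y ∈ p.support) (hyq : y ∈ q.support) : y = v := by
  by_contra hne
  exact h.ne_of_mem_support_of_append hne hyp hyq rfl

variable [DecidableEq U]

theorem exists_append_append_of_idxOf_lt (P : G.Walk a b) (hu : u ∈ P.support)
    (hw : w ∈ P.support) (huw : P.support.idxOf u < P.support.idxOf w) :
    ∃ (T : G.Walk a u) (M : G.Walk u w) (D : G.Walk w b),
      P = (T.append M).append D ∧ T.length = P.support.idxOf u := by
  have huT : u ∈ (P.takeUntil w hw).support := by
    rw [takeUntil_eq_take, support_copy, support_take, List.mem_take_iff_idxOf_lt hu]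
    omega
  have hP : (P.takeUntil w hw).append (P.dropUntil w hw) = P := P.take_spec hw
  refine ⟨_, (P.takeUntil w hw).dropUntil u huT, P.dropUntil w hw, by rw [take_spec, hP], ?_⟩
  have := length_takeUntil _ (support_subset_support_append_left _ (P.dropUntil w hw) huT)
  rwa [takeUntil_append_of_mem_left, hP] at this

theorem _root_.IsLongestPath.length_le_idxOf_add_one {P : G.Walk a b} (hP : IsLongestPath G P)
    {C : G.Walk u w} (hC : C.IsPath) (hu : u ∈ P.support) (hw : w ∈ P.support)
    (huw : P.support.idxOf u < P.support.idxOf w)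
    (hCP : ∀ y ∈ C.support, y ∈ P.support → y = u ∨ y = w) :
    C.length ≤ P.support.idxOf u + 1 := by
  obtain ⟨T, M, D, rfl, hT⟩ := exists_append_append_of_idxOf_lt P hu hw huw
  have hTMD := hP.1
  have hM : M.IsPath := hTMD.of_append_left.of_append_right
  have hMr : ¬M.reverse.Nil := by
    simpa using fun h : M.Nil ↦ huw.ne (congrArg (List.idxOf · _) h.eq)
  have hMD {y} (hyM : y ∈ M.support) (hyD : y ∈ D.support) : y = w :=
    hTMD.eq_of_mem_support_append (support_subset_support_append_right T M hyM) hyD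
  have hsub {y} (hy : y ∈ M.support ∨ y ∈ D.support) : y ∈ ((T.append M).append D).support := by
    simp only [mem_support_append_iff]; tauto
  have hNM {y} (hy : y ∈ M.reverse.tail.support) : y ∈ M.support := by
    have : y ∈ M.reverse.support := cons_support_tail hMr ▸ List.mem_cons_of_mem _ hy
    simpa using this
  have hwN : w ∉ M.reverse.tail.support := by
    have := hM.reverse.support_nodup
    rw [← cons_support_tail hMr, List.nodup_cons] at this
    exact this.1
  have hCD : (C.append D).IsPath := by
    refine hC.append hTMD.of_append_right fun y hyC hyD ↦ ?_
    rcases hCP y hyC (hsub (.inr hyD)) with rfl | rfl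
    · exact hMD M.start_mem_support hyD
    · rfl
  have hW : (M.reverse.tail.append (C.append D)).IsPath := by
    refine hM.reverse.tail.append hCD fun y hyN hyCD ↦ ?_
    rcases (mem_support_append_iff _ _).mp hyCD with hyC | hyD
    · exact (hCP y hyC (hsub (.inl (hNM hyN)))).resolve_right (by rintro rfl; exact hwN hyN)
    · exact absurd (hMD (hNM hyN) hyD ▸ hyN) hwN
  have hlen := hP.2 _ _ _ hW
  have hNlen := length_tail_add_one hMr
  simp only [length_append, length_reverse] at hlen hNlen
  omega

end SimpleGraph.Walk

theorem stmt7 (G : SimpleGraph V) (k : ℕ) (hk : 2 ≤ k)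
    {p1 p2 : V} (P : G.Walk p1 p2) (hP : IsLongestPath G P)
    (x : V)
    (v : Fin k → V) (Q : ∀ i : Fin k, G.Walk x (v i))
    (hQpath : ∀ i, (Q i).IsPath)
    (hend : ∀ i, v i ∈ P.support)
    (hdisj : ∀ i j, i ≠ j → ∀ u : V, u ∈ (Q i).support → u ∈ (Q j).support → u = x)
    (hmeet : ∀ i, ∀ u ∈ (Q i).support, u ∈ P.support → u = v i)
    (horder : ∀ i j : Fin k, i < j →
      P.support.idxOf (v i) < P.support.idxOf (v j)) :
    ((Q ⟨0, by omega⟩).length : ℤ) + (Q ⟨k - 1, by omega⟩).length - 1 ≤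
      P.support.idxOf (v ⟨0, by omega⟩) := by
  let i₀ : Fin k := ⟨0, by omega⟩
  let iₖ : Fin k := ⟨k - 1, by omega⟩
  have hlt : i₀ < iₖ := Fin.mk_lt_mk.mpr (by omega)
  have hC : ((Q i₀).reverse.append (Q iₖ)).IsPath :=
    (hQpath i₀).reverse.append (hQpath iₖ) fun y hy₀ hyₖ ↦
      hdisj i₀ iₖ hlt.ne y (by simpa using hy₀) hyₖ
  have hCP : ∀ y ∈ ((Q i₀).reverse.append (Q iₖ)).support, y ∈ P.support →
      y = v i₀ ∨ y = v iₖ := by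
    intro y hy hyP
    rcases (Walk.mem_support_append_iff _ _).mp hy with hy₀ | hyₖ
    · exact .inl (hmeet i₀ y (by simpa using hy₀) hyP)
    · exact .inr (hmeet iₖ y hyₖ hyP)
  have hlen := hP.length_le_idxOf_add_one hC (hend i₀) (hend iₖ) (horder i₀ iₖ hlt) hCP
  rw [Walk.length_append, Walk.length_reverse] at hlen
  change ((Q i₀).length : ℤ) + (Q iₖ).length - 1 ≤ P.support.idxOf (v i₀)
  omega
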